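/- arXiv:1307.8373 — 7 statements merged into one kernel-verified Lean document; each statement's English description precedes it below -/
import Mathlib

section
/- If k : Ω × B(Ω) → ℝ is a transition kernel on a Polish space Ω (i.e., k(x,·) is a finite signed Borel measure for each x and x ↦ k(x,A) is Borel measurable for each Borel set A), then the map |k| : Ω × B(Ω) → [0,∞) defined by |k|(x,A) = total variation of k(x,·) evaluated at A, is again a transition kernel; in particular x ↦ |k|(x,A) is Borel measurable for every Borel set A. -/
/-!
For a signed measure `μ` with Hahn decomposition `Ω = s ∪ sᶜ`, the quantity
`μ (C ∩ A) - μ (A \ C)` is at most `|μ| A` for every measurable `C`, with equality at `C = s`,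
and it moves by at most `2 |μ| (s ∆ C)` when `s` is replaced by `C`. Approximating `s` in
`|μ|`-measure by sets of a countable algebra generating the Borel σ-algebra of the Polish space
(which exists since that σ-algebra is countably generated) writes `|k x| A` as a countable
supremum of the measurable functions `x ↦ k x (C ∩ A) - k x (A \ C)`.
-/

open MeasureTheory Topology Filter
open scoped NNReal ENNReal BoundedContinuousFunction

noncomputable def sInt {Ω : Type*} [MeasurableSpace Ω] (μ : SignedMeasure Ω) (f : Ω → ℝ) : ℝ :=
  (∫ x, f x ∂μ.toJordanDecomposition.posPart) - ∫ x, f x ∂μ.toJordanDecomposition.negPart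

def IsTransKernel {Ω : Type*} [MeasurableSpace Ω] (k : Ω → SignedMeasure Ω) : Prop :=
  ∀ A : Set Ω, MeasurableSet A → Measurable fun x => k x A

def IsBddKernel {Ω : Type*} [MeasurableSpace Ω] (k : Ω → SignedMeasure Ω) : Prop :=
  IsTransKernel k ∧ ∃ C : ℝ≥0, ∀ x, (k x).totalVariation Set.univ ≤ C

def GivenByKernel {Ω : Type*} [MeasurableSpace Ω]
    (T : SignedMeasure Ω →ₗ[ℝ] SignedMeasure Ω) (k : Ω → SignedMeasure Ω) : Prop :=
  ∀ (μ : SignedMeasure Ω) (A : Set Ω), MeasurableSet A → T μ A = sInt μ (fun x => k x A)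

def IsBdMeasurable {Ω : Type*} [MeasurableSpace Ω] (f : Ω → ℝ) : Prop :=
  Measurable f ∧ ∃ C : ℝ, ∀ x, |f x| ≤ C

instance totalVariation_isFiniteMeasure {Ω : Type*} [MeasurableSpace Ω] (μ : SignedMeasure Ω) :
    IsFiniteMeasure μ.totalVariation := by
  unfold SignedMeasure.totalVariation; infer_instance

open scoped symmDiff

namespace MeasureTheory.SignedMeasure

variable {Ω : Type*} [MeasurableSpace Ω] (μ : SignedMeasure Ω)

lemma apply_sub_apply_le_totalVariation_symmDiff {X Y : Set Ω} (hX : MeasurableSet X)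
    (hY : MeasurableSet Y) : μ X - μ Y ≤ μ.totalVariation.real (X ∆ Y) := by
  have hsplit : ∀ {U V : Set Ω}, MeasurableSet U → MeasurableSet V →
      μ U = μ (U \ V) + μ (U ∩ V) := fun hU hV => by
    rw [← VectorMeasure.of_union (Set.disjoint_sdiff_inter) (hU.diff hV) (hU.inter hV),
      Set.sdiff_union_inter]
  rw [measureReal_symmDiff_eq hX hY, hsplit hX hY, hsplit hY hX, Set.inter_comm Y X]
  have h₁ := (le_abs_self _).trans (μ.norm_le_totalVariation (X \ Y))
  have h₂ := (neg_le_abs _).trans (μ.norm_le_totalVariation (Y \ X))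
  linarith

lemma apply_inter_sub_apply_diff_le_totalVariation {C A : Set Ω} (hC : MeasurableSet C) :
    μ (C ∩ A) - μ (A \ C) ≤ μ.totalVariation.real A := by
  rw [← measureReal_inter_add_sdiff hC (s := A), Set.inter_comm A C]
  have h₁ := (le_abs_self _).trans (μ.norm_le_totalVariation (C ∩ A))
  have h₂ := (neg_le_abs _).trans (μ.norm_le_totalVariation (A \ C))
  linarith

lemma apply_inter_sub_apply_diff_sub_le {s C A : Set Ω} (hs : MeasurableSet s)
    (hC : MeasurableSet C) (hA : MeasurableSet A) :
    (μ (s ∩ A) - μ (A \ s)) - (μ (C ∩ A) - μ (A \ C)) ≤ 2 * μ.totalVariation.real (s ∆ C) := by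
  have h₁ : μ (s ∩ A) - μ (C ∩ A) ≤ μ.totalVariation.real (s ∆ C) :=
    (μ.apply_sub_apply_le_totalVariation_symmDiff (hs.inter hA) (hC.inter hA)).trans
      (measureReal_mono fun x => by simp only [Set.mem_symmDiff, Set.mem_inter_iff]; tauto)
  have h₂ : μ (A \ C) - μ (A \ s) ≤ μ.totalVariation.real (s ∆ C) :=
    (μ.apply_sub_apply_le_totalVariation_symmDiff (hA.diff hC) (hA.diff hs)).trans
      (measureReal_mono fun x => by simp only [Set.mem_symmDiff, Set.mem_sdiff]; tauto)
  linarith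

lemma exists_measurableSet_apply_inter_sub_apply_diff_eq :
    ∃ s, MeasurableSet s ∧
      ∀ A, MeasurableSet A → μ (s ∩ A) - μ (A \ s) = μ.totalVariation.real A := by
  obtain ⟨s, hs, hpos, hneg, hposPart, hnegPart⟩ := μ.toJordanDecomposition_spec
  refine ⟨s, hs, fun A hA => ?_⟩
  rw [totalVariation, measureReal_add_apply, measureReal_def, measureReal_def, hposPart, hnegPart,
    toMeasureOfZeroLE_apply _ hpos hs hA, toMeasureOfLEZero_apply _ hneg hs.compl hA,
    Set.sdiff_eq, Set.inter_comm A]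
  simp only [ENNReal.coe_toReal, NNReal.coe_mk]
  ring

lemma totalVariation_eq_iSup_of_isSetAlgebra {𝒜 : Set (Set Ω)} (h𝒜 : IsSetAlgebra 𝒜)
    (hgen : ‹MeasurableSpace Ω› = MeasurableSpace.generateFrom 𝒜) {A : Set Ω}
    (hA : MeasurableSet A) :
    μ.totalVariation A = ⨆ C : 𝒜, ENNReal.ofReal (μ (C ∩ A) - μ (A \ C)) := by
  have hdense := Measure.MeasureDense.of_generateFrom_isSetAlgebra_finite μ.totalVariation h𝒜 hgen
  obtain ⟨s, hs, hs_eq⟩ := μ.exists_measurableSet_apply_inter_sub_apply_diff_eq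
  rw [← ofReal_measureReal]
  refine le_antisymm (le_of_forall_lt fun b hb => ?_)
    (iSup_le fun C => ENNReal.ofReal_le_ofReal
      (μ.apply_inter_sub_apply_diff_le_totalVariation (hdense.measurable C C.2)))
  have hb_top : b ≠ ⊤ := ne_top_of_lt hb
  have hb_lt : b.toReal < μ.totalVariation.real A :=
    (ENNReal.lt_ofReal_iff_toReal_lt hb_top).1 hb
  obtain ⟨C, hC𝒜, hsC⟩ := hdense.approx s hs (measure_ne_top _ _)
    ((μ.totalVariation.real A - b.toReal) / 2) (by linarith)
  have hC := μ.apply_inter_sub_apply_diff_sub_le hs (hdense.measurable C hC𝒜) hA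
  rw [hs_eq A hA] at hC
  have hsC_real : μ.totalVariation.real (s ∆ C) < (μ.totalVariation.real A - b.toReal) / 2 :=
    (ENNReal.lt_ofReal_iff_toReal_lt (measure_ne_top _ _)).1 hsC
  exact lt_iSup_iff.2 ⟨⟨C, hC𝒜⟩, (ENNReal.lt_ofReal_iff_toReal_lt hb_top).2 (by linarith)⟩

end MeasureTheory.SignedMeasure

lemma IsTransKernel.measurable_totalVariation_apply {Ω : Type*} [MeasurableSpace Ω]
    [MeasurableSpace.CountablyGenerated Ω] {k : Ω → SignedMeasure Ω} (hk : IsTransKernel k)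
    {A : Set Ω} (hA : MeasurableSet A) : Measurable fun x => (k x).totalVariation A := by
  obtain ⟨b, hb_count, hb_gen⟩ := MeasurableSpace.CountablyGenerated.isCountablyGenerated (α := Ω)
  have hgen : ‹MeasurableSpace Ω› = MeasurableSpace.generateFrom (generateSetAlgebra b) := by
    rw [hb_gen, generateFrom_generateSetAlgebra_eq]
  have := (countable_generateSetAlgebra hb_count).to_subtype
  simp_rw [fun x => (k x).totalVariation_eq_iSup_of_isSetAlgebra
    isSetAlgebra_generateSetAlgebra hgen hA]
  refine Measurable.iSup fun C => ENNReal.measurable_ofReal.comp ?_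
  have hC : MeasurableSet (C : Set Ω) := hgen ▸ MeasurableSpace.measurableSet_generateFrom C.2
  exact (hk _ (hC.inter hA)).sub (hk _ (hA.diff hC))

theorem stmt0 {Ω : Type*} [TopologicalSpace Ω] [PolishSpace Ω] [MeasurableSpace Ω] [BorelSpace Ω]
    (k : Ω → SignedMeasure Ω) (hk : IsTransKernel k) :
    (∀ x, IsFiniteMeasure ((k x).totalVariation)) ∧
    (∀ A : Set Ω, MeasurableSet A → Measurable fun x => (k x).totalVariation A) :=
  ⟨fun _ => inferInstance, fun _ hA => hk.measurable_totalVariation_apply hA⟩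
end

section
/- On a Polish space Ω, for every finite signed Borel measure μ, the total variation norm satisfies |μ|(Ω) = sup { |∫ f dμ| : f ∈ C_b(Ω), ‖f‖_∞ ≤ 1 }, i.e., the bounded continuous functions are norming for the signed measures. -/
open MeasureTheory Topology Filter
open scoped NNReal ENNReal BoundedContinuousFunction

/-!
The bound `|∫ f dμ| ≤ |μ|(Ω)` for `‖f‖ ≤ 1` is immediate from the Jordan decomposition
`μ = μ⁺ - μ⁻`. Conversely, `μ⁺` and `μ⁻` live on complementary sets of a Hahn decomposition;
since finite Borel measures on a metrizable space are regular, these sets contain disjoint closed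
sets `K₁`, `K₂` carrying all but `δ` of the mass of `μ⁺` and `μ⁻` respectively. An Urysohn
function with values in `[-1, 1]`, equal to `1` on `K₁` and `-1` on `K₂`, then has
`∫ f dμ ≥ |μ|(Ω) - 4δ`.
-/

open Set

section

variable {Ω : Type*} [TopologicalSpace Ω] [MeasurableSpace Ω] [OpensMeasurableSpace Ω]
  (ν : Measure Ω) [IsFiniteMeasure ν] {f : Ω →ᵇ ℝ}

lemma BoundedContinuousFunction.abs_integral_le_measureReal_univ (hf : ‖f‖ ≤ 1) :
    |∫ x, f x ∂ν| ≤ ν.real univ := by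
  simpa using (f.norm_integral_le_mul_norm ν).trans (mul_le_of_le_one_right measureReal_nonneg hf)

lemma BoundedContinuousFunction.measureReal_univ_sub_le_integral (hf : ‖f‖ ≤ 1) {K : Set Ω}
    (hK : MeasurableSet K) (hfK : EqOn f 1 K) : ν.real univ - 2 * ν.real Kᶜ ≤ ∫ x, f x ∂ν := by
  have hind : Integrable (Kᶜ.indicator fun _ => (2 : ℝ)) ν :=
    (integrable_const 2).indicator hK.compl
  have hle : ∀ x, 1 - Kᶜ.indicator (fun _ => (2 : ℝ)) x ≤ f x := by
    intro x
    by_cases hx : x ∈ K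
    · simp [hx, hfK hx]
    · have hfx : -1 ≤ f x := (abs_le.1 ((f.norm_coe_le_norm x).trans hf)).1
      simp only [mem_compl hx, indicator_of_mem]
      linarith
  calc ν.real univ - 2 * ν.real Kᶜ = ∫ x, (1 - Kᶜ.indicator (fun _ => (2 : ℝ)) x) ∂ν := by
        rw [integral_sub (integrable_const 1) hind, integral_indicator_const _ hK.compl,
          integral_const]
        simp [mul_comm]
    _ ≤ ∫ x, f x ∂ν := integral_mono ((integrable_const 1).sub hind) (f.integrable ν) hle

end

namespace MeasureTheory

variable {Ω : Type*} [MeasurableSpace Ω]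

lemma Measure.MutuallySingular.exists_isClosed_disjoint_measure_compl_lt [TopologicalSpace Ω]
    [OpensMeasurableSpace Ω] {p n : Measure Ω} [IsFiniteMeasure p] [IsFiniteMeasure n]
    [p.WeaklyRegular] [n.WeaklyRegular] (h : p.MutuallySingular n) {ε : ℝ≥0∞} (hε : ε ≠ 0) :
    ∃ K₁ K₂, IsClosed K₁ ∧ IsClosed K₂ ∧ Disjoint K₁ K₂ ∧ p K₁ᶜ < ε ∧ n K₂ᶜ < ε := by
  obtain ⟨s, hs, hps, hns⟩ := h
  obtain ⟨K₁, hK₁s, hK₁, hpK₁⟩ := hs.compl.exists_isClosed_sdiff_lt (measure_ne_top p _) hε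
  obtain ⟨K₂, hK₂s, hK₂, hnK₂⟩ := hs.exists_isClosed_sdiff_lt (measure_ne_top n _) hε
  refine ⟨K₁, K₂, hK₁, hK₂, disjoint_compl_left.mono hK₁s hK₂s, ?_, ?_⟩
  · rwa [← measure_sdiff_null hps, sdiff_eq_compl_inter, inter_comm, ← sdiff_eq_compl_inter]
  · rwa [← measure_sdiff_null hns, sdiff_eq_compl_inter, compl_compl, inter_comm,
      ← sdiff_eq_compl_inter]

namespace SignedMeasure

variable (μ : SignedMeasure Ω)

lemma toReal_totalVariation_univ :
    (μ.totalVariation univ).toReal =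
      μ.toJordanDecomposition.posPart.real univ + μ.toJordanDecomposition.negPart.real univ := by
  rw [totalVariation, Measure.add_apply,
    ENNReal.toReal_add (measure_ne_top _ _) (measure_ne_top _ _)]
  rfl

lemma abs_sInt_le_totalVariation [TopologicalSpace Ω] [OpensMeasurableSpace Ω] {f : Ω →ᵇ ℝ}
    (hf : ‖f‖ ≤ 1) : |sInt μ f| ≤ (μ.totalVariation univ).toReal := by
  rw [toReal_totalVariation_univ]
  exact (abs_sub _ _).trans (add_le_add (f.abs_integral_le_measureReal_univ _ hf)
    (f.abs_integral_le_measureReal_univ _ hf))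

lemma exists_norm_le_one_lt_sInt [TopologicalSpace Ω] [TopologicalSpace.PseudoMetrizableSpace Ω]
    [BorelSpace Ω] {w : ℝ} (hw : w < (μ.totalVariation univ).toReal) :
    ∃ f : Ω →ᵇ ℝ, ‖f‖ ≤ 1 ∧ w < sInt μ f := by
  rw [toReal_totalVariation_univ] at hw
  set p := μ.toJordanDecomposition.posPart
  set n := μ.toJordanDecomposition.negPart
  obtain ⟨δ, hδ, rfl⟩ : ∃ δ, 0 < δ ∧ w = p.real univ + n.real univ - 4 * δ :=
    ⟨(p.real univ + n.real univ - w) / 4, by linarith, by ring⟩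
  obtain ⟨K₁, K₂, hK₁, hK₂, hK, hpK₁, hnK₂⟩ :=
    μ.toJordanDecomposition.mutuallySingular.exists_isClosed_disjoint_measure_compl_lt
      (ENNReal.ofReal_pos.2 hδ).ne'
  have hpK₁ : p.real K₁ᶜ < δ := ENNReal.toReal_lt_of_lt_ofReal hpK₁
  have hnK₂ : n.real K₂ᶜ < δ := ENNReal.toReal_lt_of_lt_ofReal hnK₂
  obtain ⟨f, hfK₂, hfK₁, hf⟩ :=
    exists_bounded_mem_Icc_of_closed_of_le hK₂ hK₁ hK.symm (by norm_num : (-1 : ℝ) ≤ 1)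
  have hf₁ : ‖f‖ ≤ 1 := (f.norm_le zero_le_one).2 fun x => abs_le.2 (hf x)
  have hp := f.measureReal_univ_sub_le_integral p hf₁ hK₁.measurableSet hfK₁
  have hn := (-f).measureReal_univ_sub_le_integral n (by rwa [norm_neg]) hK₂.measurableSet
    fun x hx => by simp [hfK₂ hx]
  simp only [BoundedContinuousFunction.coe_neg, Pi.neg_apply, integral_neg] at hn
  refine ⟨f, hf₁, ?_⟩
  show _ < (∫ x, f x ∂p) - ∫ x, f x ∂n
  linarith

end SignedMeasure

end MeasureTheory

theorem stmt1 {Ω : Type*} [TopologicalSpace Ω] [PolishSpace Ω] [MeasurableSpace Ω] [BorelSpace Ω]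
    (μ : SignedMeasure Ω) :
    (μ.totalVariation Set.univ).toReal =
      sSup { r : ℝ | ∃ f : Ω →ᵇ ℝ, ‖f‖ ≤ 1 ∧ r = |sInt μ f| } := by
  symm
  refine csSup_eq_of_forall_le_of_forall_lt_exists_gt ⟨_, 0, by simp, rfl⟩ ?_ ?_
  · rintro _ ⟨f, hf, rfl⟩
    exact μ.abs_sInt_le_totalVariation hf
  · intro w hw
    obtain ⟨f, hf, hwf⟩ := μ.exists_norm_le_one_lt_sInt hw
    exact ⟨_, ⟨f, hf, rfl⟩, hwf.trans_le (le_abs_self _)⟩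
end

section
/- Let Ω be a Polish space. There exists a countable set D ⊆ C_b(Ω) with ‖g‖_∞ ≤ 1 for all g ∈ D, such that for every finite signed Borel measure μ on Ω one has |μ|(Ω) = sup_{g ∈ D} |∫ g dμ|. -/
open MeasureTheory Topology Filter
open scoped NNReal ENNReal BoundedContinuousFunction

/-! Every `g` with `‖g‖ ≤ 1` has `|∫ g dμ| ≤ |μ|(Ω)`. Conversely, by inner regularity the
positive set of a Hahn decomposition contains a closed `F` carrying almost all of `μ⁺`, so
`∫ (1_F - 1_Fᶜ) dμ` is close to `|μ|(Ω)`. Take `D` to be the functions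
`x ↦ 1 - 2 min 1 (n · d(x, t))` with `n ∈ ℕ` and `t` a finite subset of a countable dense set
`S`. Then `1_F - 1_Fᶜ` is reached from `D` by three bounded pointwise limits: finite subsets of `S`
exhaust countable `T ⊆ S`; the countable sets `thickening (1/(m+1)) F ∩ S` approximate `d(·, F)`;
and `n → ∞`. Dominated convergence carries the bound `|∫ g dμ| ≤ sup_D` through each limit. -/

open Set Metric

section SignedIntegral

variable {Ω : Type*} [MeasurableSpace Ω]

lemma sInt_neg (μ : SignedMeasure Ω) (f : Ω → ℝ) : sInt μ (-f) = -sInt μ f := by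
  simp only [sInt, Pi.neg_apply, integral_neg]
  ring

lemma totalVariation_univ_toReal (μ : SignedMeasure Ω) :
    (μ.totalVariation univ).toReal =
      μ.toJordanDecomposition.posPart.real univ + μ.toJordanDecomposition.negPart.real univ := by
  rw [SignedMeasure.totalVariation, Measure.add_apply,
    ENNReal.toReal_add (measure_ne_top _ _) (measure_ne_top _ _)]
  rfl

lemma abs_sInt_le (μ : SignedMeasure Ω) {f : Ω → ℝ} {C : ℝ} (hf : ∀ x, ‖f x‖ ≤ C) :
    |sInt μ f| ≤ C * (μ.totalVariation univ).toReal := by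
  have hP := norm_integral_le_of_norm_le_const (μ := μ.toJordanDecomposition.posPart)
    (Filter.Eventually.of_forall hf)
  have hN := norm_integral_le_of_norm_le_const (μ := μ.toJordanDecomposition.negPart)
    (Filter.Eventually.of_forall hf)
  rw [totalVariation_univ_toReal, mul_add]
  exact (abs_sub _ _).trans (add_le_add hP hN)

lemma tendsto_sInt_of_tendsto (μ : SignedMeasure Ω) {f : ℕ → Ω → ℝ} {g : Ω → ℝ} {C : ℝ}
    (hf : ∀ n, Measurable (f n)) (hC : ∀ n x, ‖f n x‖ ≤ C)
    (hfg : ∀ x, Tendsto (fun n => f n x) atTop (𝓝 (g x))) :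
    Tendsto (fun n => sInt μ (f n)) atTop (𝓝 (sInt μ g)) := by
  have key : ∀ ν : Measure Ω, IsFiniteMeasure ν →
      Tendsto (fun n => ∫ x, f n x ∂ν) atTop (𝓝 (∫ x, g x ∂ν)) := fun ν _ =>
    tendsto_integral_of_dominated_convergence (fun _ => C)
      (fun n => (hf n).aestronglyMeasurable) (integrable_const C)
      (fun n => Filter.Eventually.of_forall (hC n)) (Filter.Eventually.of_forall hfg)
  exact (key _ inferInstance).sub (key _ inferInstance)

lemma abs_sInt_le_of_tendsto (μ : SignedMeasure Ω) {f : ℕ → Ω → ℝ} {g : Ω → ℝ} {C M : ℝ}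
    (hf : ∀ n, Measurable (f n)) (hC : ∀ n x, ‖f n x‖ ≤ C)
    (hfg : ∀ x, Tendsto (fun n => f n x) atTop (𝓝 (g x))) (hM : ∀ n, |sInt μ (f n)| ≤ M) :
    |sInt μ g| ≤ M :=
  le_of_tendsto' (tendsto_sInt_of_tendsto μ hf hC hfg).abs hM

noncomputable def signIndicator (F : Set Ω) : Ω → ℝ := F.indicator 1 - Fᶜ.indicator 1

lemma sInt_signIndicator (μ : SignedMeasure Ω) {F : Set Ω} (hF : MeasurableSet F) :
    sInt μ (signIndicator F) =
      μ.toJordanDecomposition.posPart.real F - μ.toJordanDecomposition.posPart.real Fᶜ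
        - (μ.toJordanDecomposition.negPart.real F - μ.toJordanDecomposition.negPart.real Fᶜ) := by
  have h : ∀ ν : Measure Ω, IsFiniteMeasure ν →
      ∫ x, signIndicator F x ∂ν = ν.real F - ν.real Fᶜ := fun ν _ => by
    rw [signIndicator, integral_sub' ((integrable_const 1).indicator hF)
      ((integrable_const 1).indicator hF.compl), integral_indicator_one hF,
      integral_indicator_one hF.compl]
  exact congrArg₂ (· - ·) (h _ inferInstance) (h _ inferInstance)

end SignedIntegral

section SignApprox

variable {X : Type*} [PseudoMetricSpace X]

noncomputable def signApprox (t : Set X) (n : ℕ) : X →ᵇ ℝ :=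
  BoundedContinuousFunction.ofNormedAddCommGroup (fun x => 1 - 2 * min 1 (n * infDist x t))
    (by have := continuous_infDist_pt (α := X) t; fun_prop) 1 fun x => by
      have h0 : 0 ≤ min 1 (n * infDist x t) :=
        le_min zero_le_one (mul_nonneg n.cast_nonneg infDist_nonneg)
      rw [Real.norm_eq_abs, abs_le]
      constructor <;> linarith [min_le_left 1 (n * infDist x t)]

lemma signApprox_apply (t : Set X) (n : ℕ) (x : X) :
    signApprox t n x = 1 - 2 * min 1 (n * infDist x t) := rfl

lemma norm_signApprox_le (t : Set X) (n : ℕ) : ‖signApprox t n‖ ≤ 1 :=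
  BoundedContinuousFunction.norm_ofNormedAddCommGroup_le _ zero_le_one _

lemma norm_signApprox_apply_le (t : Set X) (n : ℕ) (x : X) : ‖signApprox t n x‖ ≤ 1 :=
  ((signApprox t n).norm_coe_le_norm x).trans (norm_signApprox_le t n)

lemma coe_signApprox_empty (n : ℕ) : ⇑(signApprox (∅ : Set X) n) = 1 := by
  ext x
  simp [signApprox_apply]

lemma tendsto_signApprox_of_tendsto_infDist {T : ℕ → Set X} {T' : Set X} (n : ℕ) {x : X}
    (h : Tendsto (fun k => infDist x (T k)) atTop (𝓝 (infDist x T'))) :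
    Tendsto (fun k => signApprox (T k) n x) atTop (𝓝 (signApprox T' n x)) :=
  ((tendsto_const_nhds.min (h.const_mul (n : ℝ))).const_mul 2).const_sub 1

lemma tendsto_signApprox_signIndicator {F : Set X} (hF : IsClosed F) (hne : F.Nonempty)
    (x : X) : Tendsto (fun n => signApprox F n x) atTop (𝓝 (signIndicator F x)) := by
  by_cases hx : x ∈ F
  · simp [signApprox_apply, signIndicator, infDist_zero_of_mem hx, hx]
  · have hpos : 0 < infDist x F := (hF.notMem_iff_infDist_pos hne).1 hx
    obtain ⟨N, hN⟩ := exists_nat_ge (infDist x F)⁻¹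
    refine tendsto_const_nhds.congr' ?_
    filter_upwards [eventually_ge_atTop N] with n hn
    have h1 : 1 ≤ n * infDist x F := by
      calc (1 : ℝ) = (infDist x F)⁻¹ * infDist x F := (inv_mul_cancel₀ hpos.ne').symm
        _ ≤ n * infDist x F := by gcongr; exact hN.trans (by exact_mod_cast hn)
    simp [signApprox_apply, signIndicator, hx, min_eq_left h1]
    norm_num

lemma tendsto_infDist_image_Iic (f : ℕ → X) (x : X) :
    Tendsto (fun k => infDist x (f '' Iic k)) atTop (𝓝 (infDist x (range f))) := by
  have hge : ∀ k, infDist x (range f) ≤ infDist x (f '' Iic k) := fun k =>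
    infDist_le_infDist_of_subset (image_subset_range _ _)
      ⟨f k, mem_image_of_mem f (mem_Iic.2 le_rfl)⟩
  refine tendsto_order.2 ⟨fun a ha => Eventually.of_forall fun k => ha.trans_le (hge k),
    fun a ha => ?_⟩
  obtain ⟨y, ⟨i, rfl⟩, hy⟩ := (infDist_lt_iff (range_nonempty f)).1 ha
  filter_upwards [eventually_ge_atTop i] with k hk
  exact (infDist_le_dist_of_mem (mem_image_of_mem f (mem_Iic.2 hk))).trans_lt hy

lemma tendsto_infDist_inter_thickening {S F : Set X} (hS : Dense S) (hF : F.Nonempty) (x : X) :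
    Tendsto (fun m : ℕ => infDist x (thickening (1 / (m + 1)) F ∩ S)) atTop
      (𝓝 (infDist x F)) := by
  have hsub : ∀ m : ℕ, F ⊆ closure (thickening (1 / (m + 1)) F ∩ S) := fun m =>
    (self_subset_thickening Nat.one_div_pos_of_nat F).trans
      (hS.open_subset_closure_inter isOpen_thickening)
  have hle : ∀ m : ℕ, infDist x (thickening (1 / (m + 1)) F ∩ S) ≤ infDist x F := fun m => by
    rw [← infDist_closure]; exact infDist_le_infDist_of_subset (hsub m) hF
  have hge : ∀ m : ℕ, infDist x F - 1 / (m + 1) ≤ infDist x (thickening (1 / (m + 1)) F ∩ S) :=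
    fun m => by
    refine (le_infDist ?_).2 fun y hy => ?_
    · obtain ⟨z, hz⟩ := hF
      exact (closure_nonempty_iff.1 ⟨z, hsub m hz⟩)
    · have := infDist_le_infDist_add_dist (x := x) (y := y) (s := F)
      have := (mem_thickening_iff_infDist_lt hF).1 hy.1
      linarith [dist_comm x y]
  refine tendsto_of_tendsto_of_tendsto_of_le_of_le ?_ tendsto_const_nhds hge hle
  simpa using tendsto_const_nhds.sub (tendsto_one_div_add_atTop_nhds_zero_nat (𝕜 := ℝ))

end SignApprox

section Norming

variable {X : Type*} [PseudoMetricSpace X] [MeasurableSpace X]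

lemma exists_isClosed_totalVariation_sub_le_sInt [BorelSpace X] (μ : SignedMeasure X) {ε : ℝ}
    (hε : 0 < ε) :
    ∃ F, IsClosed F ∧ (μ.totalVariation univ).toReal - ε ≤ sInt μ (signIndicator F) := by
  obtain ⟨s, hs, hPs, hNs⟩ := μ.toJordanDecomposition.mutuallySingular
  set P := μ.toJordanDecomposition.posPart
  set N := μ.toJordanDecomposition.negPart
  obtain ⟨F, hFs, hF, hPF⟩ := hs.compl.exists_isClosed_sdiff_lt (measure_ne_top P _)
    (ENNReal.ofReal_pos.2 (half_pos hε)).ne'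
  have hNF : N.real F = 0 := by simp [measureReal_def, measure_mono_null hFs hNs]
  have hPFc : P.real Fᶜ < ε / 2 := by
    rw [← measureReal_sdiff_null (s₁ := Fᶜ) (s₂ := s) (by simp [measureReal_def, hPs]),
      sdiff_eq, inter_comm, ← sdiff_eq]
    exact ENNReal.toReal_lt_of_lt_ofReal hPF
  refine ⟨F, hF, ?_⟩
  rw [sInt_signIndicator μ hF.measurableSet, totalVariation_univ_toReal,
    ← measureReal_add_measureReal_compl (μ := P) hF.measurableSet,
    ← measureReal_add_measureReal_compl (μ := N) hF.measurableSet]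
  linarith

variable [OpensMeasurableSpace X] {S : Set X} (hSc : S.Countable) (μ : SignedMeasure X) {M : ℝ}
  (hM : ∀ t ⊆ S, t.Finite → ∀ n, |sInt μ (signApprox t n)| ≤ M)
include hSc hM

lemma abs_sInt_signApprox_le_of_countable {T : Set X} (hTS : T ⊆ S) (n : ℕ) :
    |sInt μ (signApprox T n)| ≤ M := by
  rcases T.eq_empty_or_nonempty with rfl | hne
  · exact hM ∅ (empty_subset S) finite_empty n
  obtain ⟨f, rfl⟩ := (hSc.mono hTS).exists_eq_range hne
  exact abs_sInt_le_of_tendsto μ (fun _ => (signApprox _ n).continuous.measurable)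
    (fun _ => norm_signApprox_apply_le _ n)
    (fun x => tendsto_signApprox_of_tendsto_infDist n (tendsto_infDist_image_Iic f x))
    (fun k => hM _ ((image_subset_range _ _).trans hTS) ((finite_Iic k).image f) n)

lemma abs_sInt_signIndicator_le (hS : Dense S) {F : Set X} (hF : IsClosed F) :
    |sInt μ (signIndicator F)| ≤ M := by
  rcases F.eq_empty_or_nonempty with rfl | hne
  · have h : signIndicator (∅ : Set X) = -⇑(signApprox ∅ 0) := by
      ext x
      simp [signIndicator, coe_signApprox_empty]
    rw [h, sInt_neg, abs_neg]
    exact hM ∅ (empty_subset S) finite_empty 0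
  have hclosed (n : ℕ) : |sInt μ (signApprox F n)| ≤ M :=
    abs_sInt_le_of_tendsto μ (fun _ => (signApprox _ n).continuous.measurable)
      (fun _ => norm_signApprox_apply_le _ n)
      (fun x => tendsto_signApprox_of_tendsto_infDist n
        (tendsto_infDist_inter_thickening hS hne x))
      (fun _ => abs_sInt_signApprox_le_of_countable hSc μ hM inter_subset_right n)
  exact abs_sInt_le_of_tendsto μ (fun n => (signApprox F n).continuous.measurable)
    (norm_signApprox_apply_le F) (tendsto_signApprox_signIndicator hF hne) hclosed

end Norming

theorem stmt3 {Ω : Type*} [TopologicalSpace Ω] [PolishSpace Ω] [MeasurableSpace Ω] [BorelSpace Ω] :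
    ∃ D : Set (Ω →ᵇ ℝ), D.Countable ∧ (∀ g ∈ D, ‖g‖ ≤ 1) ∧
      ∀ μ : SignedMeasure Ω,
        (μ.totalVariation Set.univ).toReal = sSup { r : ℝ | ∃ g ∈ D, r = |sInt μ g| } := by
  let := TopologicalSpace.upgradeIsCompletelyMetrizable Ω
  obtain ⟨S, hSc, hS⟩ := TopologicalSpace.exists_countable_dense Ω
  set D := image2 signApprox {t | t.Finite ∧ t ⊆ S} univ
  refine ⟨D, (countable_ofPred_finite_subset hSc).image2 countable_univ _, ?_, fun μ => ?_⟩
  · rintro _ ⟨t, -, n, -, rfl⟩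
    exact norm_signApprox_le t n
  have hbdd : ∀ r ∈ {r : ℝ | ∃ g ∈ D, r = |sInt μ g|}, r ≤ (μ.totalVariation univ).toReal := by
    rintro _ ⟨_, ⟨t, -, n, -, rfl⟩, rfl⟩
    simpa using abs_sInt_le μ (norm_signApprox_apply_le t n)
  have hD (t) (hts : t ⊆ S) (ht : t.Finite) (n) : signApprox t n ∈ D :=
    mem_image2_of_mem ⟨ht, hts⟩ (mem_univ n)
  refine le_antisymm (le_of_forall_sub_le fun ε hε => ?_)
    (csSup_le ⟨_, _, hD ∅ (empty_subset S) finite_empty 0, rfl⟩ hbdd)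
  obtain ⟨F, hF, hle⟩ := exists_isClosed_totalVariation_sub_le_sInt μ hε
  exact hle.trans ((le_abs_self _).trans (abs_sInt_signIndicator_le hSc μ
    (fun t hts ht n => le_csSup ⟨_, hbdd⟩ ⟨_, hD t hts ht n, rfl⟩) hS hF))
end

section
/- Let Ω = (−ℕ) ∪ ℕ ∪ {∞} be the one-point-compactified-type Polish space homeomorphic to {0} ∪ {±1/n : n ∈ ℕ} ⊆ ℝ, and let k be the transition kernel with k(n,·) = δ_n − δ_{n+1} for n ∈ ℕ and k(x,·) = 0 otherwise. Then the operator T given by k satisfies T*C_b(Ω) ⊆ C_b(Ω), but the operator U given by |k| does not: U* maps the constant function 1 to 2·1_ℕ, which is not continuous. -/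
open MeasureTheory Topology Filter
open scoped NNReal ENNReal BoundedContinuousFunction

noncomputable instance : MeasurableSpace (OnePoint (ℕ ⊕ ℕ)) := borel _
instance : BorelSpace (OnePoint (ℕ ⊕ ℕ)) := ⟨rfl⟩

abbrev Ω9 : Type := OnePoint (ℕ ⊕ ℕ)

open scoped Classical in
noncomputable def k9 : Ω9 → SignedMeasure Ω9 := fun x =>
  if h : ∃ n : ℕ, x = ((Sum.inl n : ℕ ⊕ ℕ) : Ω9) then
    (Measure.dirac ((Sum.inl h.choose : ℕ ⊕ ℕ) : Ω9)).toSignedMeasure -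
      (Measure.dirac ((Sum.inl (h.choose + 1) : ℕ ⊕ ℕ) : Ω9)).toSignedMeasure
  else 0

/-- Auxiliary: the Jordan decomposition of `δ_a - δ_b` for `a ≠ b`. -/
noncomputable def jd9 (a b : Ω9) (hab : a ≠ b) : JordanDecomposition Ω9 where
  posPart := Measure.dirac a
  negPart := Measure.dirac b
  mutuallySingular := by
    refine ⟨{b}, measurableSet_singleton b, ?_, ?_⟩ <;>
      simp [Measure.dirac_apply' , hab]

lemma jd9_eq (a b : Ω9) (hab : a ≠ b) :
    ((Measure.dirac a).toSignedMeasure - (Measure.dirac b).toSignedMeasure).toJordanDecomposition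
      = jd9 a b hab := by
  have h : (jd9 a b hab).toSignedMeasure =
      (Measure.dirac a).toSignedMeasure - (Measure.dirac b).toSignedMeasure := rfl
  rw [← h, JordanDecomposition.toJordanDecomposition_toSignedMeasure]

lemma k9_inl (n : ℕ) : k9 ((Sum.inl n : ℕ ⊕ ℕ) : Ω9) =
    (Measure.dirac ((Sum.inl n : ℕ ⊕ ℕ) : Ω9)).toSignedMeasure -
      (Measure.dirac ((Sum.inl (n + 1) : ℕ ⊕ ℕ) : Ω9)).toSignedMeasure := by
  classical
  have h : ∃ m : ℕ, ((Sum.inl n : ℕ ⊕ ℕ) : Ω9) = ((Sum.inl m : ℕ ⊕ ℕ) : Ω9) := ⟨n, rfl⟩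
  have hc : h.choose = n := by
    have := h.choose_spec
    rw [OnePoint.coe_eq_coe] at this
    exact (Sum.inl_injective this).symm
  simp only [k9, dif_pos h, hc]

lemma k9_not (x : Ω9) (h : ¬ ∃ n : ℕ, x = ((Sum.inl n : ℕ ⊕ ℕ) : Ω9)) : k9 x = 0 := by
  classical
  simp only [k9, dif_neg h]

lemma inl_ne (n : ℕ) : ((Sum.inl n : ℕ ⊕ ℕ) : Ω9) ≠ ((Sum.inl (n + 1) : ℕ ⊕ ℕ) : Ω9) := by
  simp [OnePoint.coe_eq_coe]

lemma tv_inl (n : ℕ) :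
    (k9 ((Sum.inl n : ℕ ⊕ ℕ) : Ω9)).totalVariation =
      Measure.dirac ((Sum.inl n : ℕ ⊕ ℕ) : Ω9) + Measure.dirac ((Sum.inl (n+1) : ℕ ⊕ ℕ) : Ω9) := by
  rw [SignedMeasure.totalVariation, k9_inl n, jd9_eq _ _ (inl_ne n)]
  rfl

lemma sInt_inl (n : ℕ) (f : Ω9 → ℝ) :
    sInt (k9 ((Sum.inl n : ℕ ⊕ ℕ) : Ω9)) f
      = f ((Sum.inl n : ℕ ⊕ ℕ) : Ω9) - f ((Sum.inl (n + 1) : ℕ ⊕ ℕ) : Ω9) := by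
  rw [sInt, k9_inl n, jd9_eq _ _ (inl_ne n)]
  show (∫ x, f x ∂Measure.dirac _) - (∫ x, f x ∂Measure.dirac _) = _
  rw [integral_dirac, integral_dirac]

lemma sInt_zero (f : Ω9 → ℝ) : sInt (0 : SignedMeasure Ω9) f = 0 := by
  simp [sInt, SignedMeasure.toJordanDecomposition_zero]

lemma tendsto_inl_infty :
    Tendsto (fun n : ℕ => ((Sum.inl n : ℕ ⊕ ℕ) : Ω9)) atTop (𝓝 (OnePoint.infty : Ω9)) := by
  rw [← Nat.cofinite_eq_atTop]
  have h1 : Tendsto (Sum.inl : ℕ → ℕ ⊕ ℕ) cofinite cofinite :=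
    Sum.inl_injective.tendsto_cofinite
  have h2 : Tendsto ((↑) : ℕ ⊕ ℕ → Ω9) cofinite (𝓝 (OnePoint.infty : Ω9)) := by
    rw [← cocompact_eq_cofinite, ← coclosedCompact_eq_cocompact]
    exact OnePoint.tendsto_coe_infty
  exact h2.comp h1

lemma cofinite_sum_le : (cofinite : Filter (ℕ ⊕ ℕ)) =
    map Sum.inl cofinite ⊔ map Sum.inr cofinite := by
  ext s
  simp only [mem_sup, mem_map, mem_cofinite, Set.preimage_compl]
  constructor
  · intro h
    exact ⟨(Set.finite_preimage_inl_and_inr.2 h).1, (Set.finite_preimage_inl_and_inr.2 h).2⟩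
  · rintro ⟨h1, h2⟩
    exact Set.finite_preimage_inl_and_inr.1 ⟨h1, h2⟩

theorem stmt9 :
    (∀ f : Ω9 →ᵇ ℝ, Continuous fun x : Ω9 => sInt (k9 x) f) ∧
    (∀ n : ℕ, ((k9 ((Sum.inl n : ℕ ⊕ ℕ) : Ω9)).totalVariation Set.univ).toReal = 2) ∧
    (∀ x : Ω9, (¬ ∃ n : ℕ, x = ((Sum.inl n : ℕ ⊕ ℕ) : Ω9)) →
      ((k9 x).totalVariation Set.univ).toReal = 0) ∧
    ¬ Continuous fun x : Ω9 => ((k9 x).totalVariation Set.univ).toReal := by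
  have htv2 : ∀ n : ℕ, ((k9 ((Sum.inl n : ℕ ⊕ ℕ) : Ω9)).totalVariation Set.univ).toReal = 2 := by
    intro n
    rw [tv_inl n]
    simp only [Measure.add_apply, Measure.dirac_apply_of_mem (Set.mem_univ _)]
    norm_num
  have htv0 : ∀ x : Ω9, (¬ ∃ n : ℕ, x = ((Sum.inl n : ℕ ⊕ ℕ) : Ω9)) →
      ((k9 x).totalVariation Set.univ).toReal = 0 := by
    intro x hx
    rw [k9_not x hx, SignedMeasure.totalVariation_zero]
    simp
  refine ⟨?_, htv2, htv0, ?_⟩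
  · -- continuity of x ↦ sInt (k9 x) f
    intro f
    set g : Ω9 → ℝ := fun x => sInt (k9 x) f with hg
    have hginf : g OnePoint.infty = 0 := by
      rw [hg]
      simp only
      rw [k9_not _ (by rintro ⟨n, hn⟩; exact (OnePoint.infty_ne_coe _) hn), sInt_zero]
    rw [continuous_iff_continuousAt]
    intro x
    induction x using OnePoint.rec with
    | infty =>
      rw [OnePoint.continuousAt_infty', hginf]
      rw [coclosedCompact_eq_cocompact, cocompact_eq_cofinite, cofinite_sum_le]
      rw [tendsto_sup]
      constructor
      · -- along inl
        rw [tendsto_map'_iff]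
        have hinf : Tendsto (fun n : ℕ => f ((Sum.inl n : ℕ ⊕ ℕ) : Ω9)) atTop (𝓝 (f OnePoint.infty)) :=
          (f.continuous.tendsto _).comp tendsto_inl_infty
        have hinf1 : Tendsto (fun n : ℕ => f ((Sum.inl (n + 1) : ℕ ⊕ ℕ) : Ω9)) atTop (𝓝 (f OnePoint.infty)) :=
          hinf.comp (tendsto_add_atTop_nat 1)
        have : Tendsto (fun n : ℕ =>
            f ((Sum.inl n : ℕ ⊕ ℕ) : Ω9) - f ((Sum.inl (n + 1) : ℕ ⊕ ℕ) : Ω9)) atTop (𝓝 0) := by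
          simpa using hinf.sub hinf1
        rw [← Nat.cofinite_eq_atTop] at this
        refine this.congr fun n => ?_
        exact (sInt_inl n f).symm
      · -- along inr
        rw [tendsto_map'_iff]
        have : ∀ n : ℕ, g ((Sum.inr n : ℕ ⊕ ℕ) : Ω9) = 0 := by
          intro n
          rw [hg]
          simp only
          rw [k9_not _ (by rintro ⟨m, hm⟩; rw [OnePoint.coe_eq_coe] at hm; exact Sum.inr_ne_inl hm),
            sInt_zero]
        have h0 : ((g ∘ ((↑) : ℕ ⊕ ℕ → Ω9)) ∘ Sum.inr) = fun _ : ℕ => (0:ℝ) :=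
          funext fun n => this n
        rw [h0]
        exact tendsto_const_nhds
    | coe y =>
      rw [OnePoint.continuousAt_coe]
      exact continuous_of_discreteTopology.continuousAt
  · -- discontinuity of total variation
    intro hcont
    have h1 : Tendsto (fun n : ℕ =>
        ((k9 ((Sum.inl n : ℕ ⊕ ℕ) : Ω9)).totalVariation Set.univ).toReal) atTop
        (𝓝 (((k9 (OnePoint.infty : Ω9)).totalVariation Set.univ).toReal)) :=
      (hcont.tendsto _).comp tendsto_inl_infty
    have h0 : ((k9 (OnePoint.infty : Ω9)).totalVariation Set.univ).toReal = 0 :=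
      htv0 _ (by rintro ⟨n, hn⟩; exact (OnePoint.infty_ne_coe _) hn)
    rw [h0] at h1
    have h2 : Tendsto (fun _ : ℕ => (2:ℝ)) atTop (𝓝 0) := by
      refine Tendsto.congr (fun n => ?_) h1
      exact htv2 n
    have := tendsto_nhds_unique h2 tendsto_const_nhds
    norm_num at this
end

section
/- Let k be a transition kernel on a Polish space Ω, α > 0, and let {B_n : n ∈ ℕ} be a countable basis of the topology of Ω that is closed under finite unions. Then {x : k₊(x,Ω) > α} = ⋃_{n∈ℕ} {x : k(x,B_n) > α}, where k₊(x,·) is the positive part of the signed measure k(x,·). -/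
open MeasureTheory Topology Filter
open scoped NNReal ENNReal BoundedContinuousFunction

open Set TopologicalSpace

/-!
By the Hahn decomposition, `k₊(x, Ω) = k(x, P)` for a positive set `P`, while `k(x, A) ≤ k₊(x, Ω)`
for every measurable `A`; so `k₊(x, Ω) > α` iff `k(x, A) > α` for some measurable `A`.
Outer regularity of the (finite) negative part lets us enlarge `A` to an open `U` with
`k(x, U) > α`. Since the basis is closed under finite unions, `U` is an increasing union of
basic sets, and continuity from below yields a basic set `B n` with `k(x, B n) > α`.
-/

namespace TopologicalSpace.IsTopologicalBasis

variable {X : Type*} [TopologicalSpace X] {B : ℕ → Set X}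

lemma exists_monotone_iUnion_eq (hB : IsTopologicalBasis (range B))
    (hBunion : ∀ n m, ∃ j, B j = B n ∪ B m) {U : Set X} (hU : IsOpen U) (hne : U.Nonempty) :
    ∃ j : ℕ → ℕ, Monotone (B ∘ j) ∧ ⋃ n, B (j n) = U := by
  obtain ⟨y, hy⟩ := hne
  obtain ⟨-, ⟨m₀, rfl⟩, -, hm₀⟩ := hB.exists_subset_of_mem_open hy hU
  classical
  let c : ℕ → ℕ := fun m => if B m ⊆ U then m else m₀
  have hcU : ∀ m, B (c m) ⊆ U := fun m => by
    by_cases h : B m ⊆ U <;> simp [c, h, hm₀]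
  have hpartial : ∀ n, ∃ j, B j = partialSups (B ∘ c) n := by
    intro n
    induction n with
    | zero => exact ⟨c 0, by simp⟩
    | succ n ih =>
      obtain ⟨j, hj⟩ := ih
      obtain ⟨j', hj'⟩ := hBunion j (c (n + 1))
      exact ⟨j', by rw [hj', hj, ← Order.succ_eq_add_one, partialSups_succ]; rfl⟩
  choose j hj using hpartial
  have hiUnion : ⋃ n, B (c n) = U := by
    refine (iUnion_subset hcU).antisymm fun z hz => ?_
    obtain ⟨-, ⟨m, rfl⟩, hzm, hmU⟩ := hB.exists_subset_of_mem_open hz hU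
    exact mem_iUnion.2 ⟨m, by simpa [c, hmU] using hzm⟩
  refine ⟨j, ?_, ?_⟩
  · intro a b hab
    simp only [Function.comp, hj]
    exact (partialSups _).monotone hab
  · simp only [hj, ← hiUnion]
    exact iSup_partialSups_eq (B ∘ c)

end TopologicalSpace.IsTopologicalBasis

namespace MeasureTheory.SignedMeasure

variable {Ω : Type*} [MeasurableSpace Ω]

lemma apply_le_posPart_real (s : SignedMeasure Ω) {A : Set Ω} (hA : MeasurableSet A) :
    s A ≤ s.toJordanDecomposition.posPart.real A := by
  rw [s.apply_eq_posPart_real_sub_negPart_real hA]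
  linarith [measureReal_nonneg (μ := s.toJordanDecomposition.negPart) (s := A)]

lemma exists_apply_eq_posPart_real_univ (s : SignedMeasure Ω) :
    ∃ i, MeasurableSet i ∧ s i = s.toJordanDecomposition.posPart.real univ := by
  obtain ⟨i, hi, hpos, -, hP, -⟩ := s.toJordanDecomposition_spec
  refine ⟨i, hi, ?_⟩
  rw [measureReal_def, hP, toMeasureOfZeroLE_apply _ hpos hi MeasurableSet.univ]
  simp

lemma ofReal_lt_posPart_univ_iff (s : SignedMeasure Ω) {α : ℝ} (hα : 0 ≤ α) :
    ENNReal.ofReal α < s.toJordanDecomposition.posPart univ ↔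
      ∃ A, MeasurableSet A ∧ α < s A := by
  rw [ENNReal.ofReal_lt_iff_lt_toReal hα (measure_ne_top _ _), ← measureReal_def]
  constructor
  · obtain ⟨i, hi, hsi⟩ := s.exists_apply_eq_posPart_real_univ
    exact fun h => ⟨i, hi, hsi ▸ h⟩
  · rintro ⟨A, hA, hαA⟩
    exact hαA.trans_le ((s.apply_le_posPart_real hA).trans (measureReal_mono (subset_univ A)))

lemma exists_isOpen_superset_lt_apply [TopologicalSpace Ω] [PseudoMetrizableSpace Ω]
    [BorelSpace Ω] (s : SignedMeasure Ω) {A : Set Ω} (hA : MeasurableSet A) {α : ℝ}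
    (hαA : α < s A) : ∃ U, A ⊆ U ∧ IsOpen U ∧ α < s U := by
  set P := s.toJordanDecomposition.posPart
  set N := s.toJordanDecomposition.negPart
  obtain ⟨U, hAU, hU, hNU⟩ := Set.exists_isOpen_lt_of_lt (μ := N) A
    (N A + ENNReal.ofReal (s A - α)) (ENNReal.lt_add_right (measure_ne_top _ _)
      (by simpa using hαA))
  refine ⟨U, hAU, hU, ?_⟩
  have hNU' : N.real U < N.real A + (s A - α) := by
    have h := (ENNReal.toReal_lt_toReal (measure_ne_top _ _) (by finiteness)).2 hNU
    rwa [ENNReal.toReal_add (measure_ne_top _ _) ENNReal.ofReal_ne_top,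
      ENNReal.toReal_ofReal (by linarith)] at h
  have hPU : P.real A ≤ P.real U := measureReal_mono hAU
  rw [s.apply_eq_posPart_real_sub_negPart_real hA] at hNU'
  rw [s.apply_eq_posPart_real_sub_negPart_real hU.measurableSet]
  linarith

lemma exists_lt_apply_iff_of_isTopologicalBasis [TopologicalSpace Ω] [PseudoMetrizableSpace Ω]
    [BorelSpace Ω] (s : SignedMeasure Ω) {B : ℕ → Set Ω} (hB : IsTopologicalBasis (range B))
    (hBunion : ∀ n m, ∃ j, B j = B n ∪ B m) {α : ℝ} (hα : 0 ≤ α) :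
    (∃ A, MeasurableSet A ∧ α < s A) ↔ ∃ n, α < s (B n) := by
  refine ⟨fun ⟨A, hA, hαA⟩ => ?_, fun ⟨n, hn⟩ => ⟨B n, (hB.isOpen ⟨n, rfl⟩).measurableSet, hn⟩⟩
  obtain ⟨U, -, hU, hαU⟩ := s.exists_isOpen_superset_lt_apply hA hαA
  have hne : U.Nonempty := nonempty_iff_ne_empty.2 fun h => by
    rw [h, VectorMeasure.empty] at hαU
    linarith
  obtain ⟨j, hmono, hjU⟩ := hB.exists_monotone_iUnion_eq hBunion hU hne
  have hlim := s.tendsto_vectorMeasure_iUnion_atTop_nat hmono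
    fun n => (hB.isOpen ⟨j n, rfl⟩).measurableSet
  rw [Function.comp_def, hjU] at hlim
  obtain ⟨n, hn⟩ := (hlim.eventually (eventually_gt_nhds hαU)).exists
  exact ⟨j n, hn⟩

end MeasureTheory.SignedMeasure

theorem stmt10_general {Ω : Type*} [TopologicalSpace Ω] [PolishSpace Ω] [MeasurableSpace Ω] [BorelSpace Ω]
    (k : Ω → SignedMeasure Ω) (α : ℝ) (hα : 0 < α)
    (B : ℕ → Set Ω) (hB : TopologicalSpace.IsTopologicalBasis (Set.range B))
    (hBunion : ∀ n m : ℕ, ∃ j : ℕ, B j = B n ∪ B m) :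
    {x : Ω | ENNReal.ofReal α < (k x).toJordanDecomposition.posPart Set.univ} =
      ⋃ n : ℕ, {x : Ω | α < k x (B n)} := by
  ext x
  rw [mem_ofPred_eq, mem_iUnion, (k x).ofReal_lt_posPart_univ_iff hα.le,
    (k x).exists_lt_apply_iff_of_isTopologicalBasis hB hBunion hα.le]
  rfl

theorem stmt10 {Ω : Type*} [TopologicalSpace Ω] [PolishSpace Ω] [MeasurableSpace Ω] [BorelSpace Ω]
    (k : Ω → SignedMeasure Ω) (hk : IsTransKernel k) (α : ℝ) (hα : 0 < α)
    (B : ℕ → Set Ω) (hB : TopologicalSpace.IsTopologicalBasis (Set.range B))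
    (hBunion : ∀ n m : ℕ, ∃ j : ℕ, B j = B n ∪ B m) :
    {x : Ω | ENNReal.ofReal α < (k x).toJordanDecomposition.posPart Set.univ} =
      ⋃ n : ℕ, {x : Ω | α < k x (B n)} :=
  stmt10_general k α hα B hB hBunion
end

section
/- On the space M(Ω) of finite signed Borel measures on an uncountable Polish space Ω (e.g. Ω = ℝ), there exists a positive rank-one operator T and a weakly continuous positive operator S with 0 ≤ T ≤ S such that T is not weakly continuous. Hence the weakly continuous operators are not an order ideal in L(M(Ω)). -/
open MeasureTheory Topology Filter
open scoped NNReal ENNReal BoundedContinuousFunction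

/-!
Take `T = φ ⊗ m` and `S = 1 ⊗ m`, where `m` is Lebesgue measure on `[0, 1]` and `φ μ` is the
mass of the atomless part of `μ`. On positive measures `0 ≤ φ μ ≤ μ univ`, so `0 ≤ T ≤ S`, and
`S` has the constant kernel `m`. An operator with kernel `k` sends `δ x` to `k x`; since `φ`
vanishes on Dirac measures, a kernel for `T` would be zero, so `T = 0`, contradicting `φ m = 1`.
-/

open Set

namespace MeasureTheory

lemma Measure.toSignedMeasure_toJordanDecomposition {Ω : Type*} [MeasurableSpace Ω]
    (ν : Measure Ω) [IsFiniteMeasure ν] :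
    ν.toSignedMeasure.toJordanDecomposition = ⟨ν, 0, .zero_right⟩ :=
  SignedMeasure.toJordanDecomposition_eq (by simp [JordanDecomposition.toSignedMeasure])

lemma Measure.summable_measureReal_singleton {Ω : Type*} [MeasurableSpace Ω]
    [MeasurableSingletonClass Ω] (ν : Measure Ω) [IsFiniteMeasure ν] :
    Summable fun x => ν.real {x} :=
  ENNReal.summable_toReal <| ne_top_of_le_ne_top (measure_ne_top ν univ) <|
    tsum_measure_le_measure_univ (fun _ => (measurableSet_singleton _).nullMeasurableSet)
      fun _ _ hxy => (disjoint_singleton.2 hxy).aedisjoint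

namespace SignedMeasure

variable {Ω : Type*} [MeasurableSpace Ω]

lemma apply_nonneg {μ : SignedMeasure Ω} (hμ : 0 ≤ μ) (A : Set Ω) : 0 ≤ μ A :=
  VectorMeasure.le_iff'.1 hμ A

lemma smul_le_smul_of_nonneg_right {a b : ℝ} (hab : a ≤ b) {m : SignedMeasure Ω} (hm : 0 ≤ m) :
    a • m ≤ b • m :=
  VectorMeasure.le_iff'.2 fun A => mul_le_mul_of_nonneg_right hab (apply_nonneg hm A)

def evalₗ (A : Set Ω) : SignedMeasure Ω →ₗ[ℝ] ℝ where
  toFun μ := μ A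
  map_add' _ _ := rfl
  map_smul' _ _ := rfl

lemma sInt_const (μ : SignedMeasure Ω) (c : ℝ) : sInt μ (fun _ => c) = μ univ * c := by
  rw [sInt, integral_const, integral_const, μ.apply_eq_posPart_real_sub_negPart_real .univ,
    smul_eq_mul, smul_eq_mul, sub_mul]

lemma sInt_toSignedMeasure (ν : Measure Ω) [IsFiniteMeasure ν] (f : Ω → ℝ) :
    sInt ν.toSignedMeasure f = ∫ x, f x ∂ν := by
  simp [sInt, ν.toSignedMeasure_toJordanDecomposition]

section Atoms

variable [MeasurableSingletonClass Ω]

lemma summable_apply_singleton (μ : SignedMeasure Ω) : Summable fun x => μ {x} :=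
  μ.totalVariation.summable_measureReal_singleton.of_norm_bounded
    fun x => μ.norm_le_totalVariation {x}

lemma sum_apply_singleton (μ : SignedMeasure Ω) (s : Finset Ω) : ∑ x ∈ s, μ {x} = μ s := by
  simp only [μ.apply_eq_posPart_real_sub_negPart_real (measurableSet_singleton _),
    μ.apply_eq_posPart_real_sub_negPart_real s.measurableSet, Finset.sum_sub_distrib,
    sum_measureReal_singleton]

lemma tsum_apply_singleton_le {μ : SignedMeasure Ω} (hμ : 0 ≤ μ) :
    ∑' x, μ {x} ≤ μ univ :=
  μ.summable_apply_singleton.tsum_le_of_sum_le fun s => by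
    rw [sum_apply_singleton, ← sub_nonneg, ← VectorMeasure.of_compl s.measurableSet]
    exact apply_nonneg hμ _

/-- The functional `P* 1` of the paper, `P` being the band projection onto atomless measures:
the atomic part of `μ` is `∑ x, μ {x} • δ x`. -/
noncomputable def diffuseMass : SignedMeasure Ω →ₗ[ℝ] ℝ where
  toFun μ := μ univ - ∑' x, μ {x}
  map_add' μ ν := by
    simp only [add_apply,
      (summable_apply_singleton μ).tsum_add (summable_apply_singleton ν)]
    ring
  map_smul' c μ := by
    simp only [smul_apply, smul_eq_mul, tsum_mul_left, RingHom.id_apply]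
    ring

lemma diffuseMass_apply (μ : SignedMeasure Ω) : diffuseMass μ = μ univ - ∑' x, μ {x} := rfl

lemma diffuseMass_nonneg {μ : SignedMeasure Ω} (hμ : 0 ≤ μ) : 0 ≤ diffuseMass μ :=
  sub_nonneg.2 (tsum_apply_singleton_le hμ)

lemma diffuseMass_le_apply_univ {μ : SignedMeasure Ω} (hμ : 0 ≤ μ) :
    diffuseMass μ ≤ μ univ :=
  sub_le_self _ (tsum_nonneg fun x => apply_nonneg hμ {x})

lemma diffuseMass_dirac (x : Ω) : diffuseMass (Measure.dirac x).toSignedMeasure = 0 := by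
  rw [diffuseMass_apply, tsum_eq_single x, sub_eq_zero]
  · simp [measureReal_def]
  · intro y hy
    simp [measureReal_def, Measure.dirac_apply', hy.symm]

lemma diffuseMass_toSignedMeasure (ν : Measure Ω) [IsFiniteMeasure ν] [NullSingletonClass ν] :
    diffuseMass ν.toSignedMeasure = ν.real univ := by
  simp [diffuseMass_apply, measureReal_def]

end Atoms

end SignedMeasure

end MeasureTheory

section

variable {Ω : Type*} [MeasurableSpace Ω]

lemma isBddKernel_const (m : SignedMeasure Ω) : IsBddKernel fun _ : Ω => m :=
  ⟨fun _ _ => measurable_const,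
    (m.totalVariation univ).toNNReal, fun _ => (ENNReal.coe_toNNReal (measure_ne_top _ _)).ge⟩

lemma givenByKernel_const (m : SignedMeasure Ω) :
    GivenByKernel ((SignedMeasure.evalₗ univ).smulRight m) fun _ => m := fun μ A _ => by
  rw [SignedMeasure.sInt_const]
  rfl

namespace GivenByKernel

variable [MeasurableSingletonClass Ω] {T : SignedMeasure Ω →ₗ[ℝ] SignedMeasure Ω}
  {k : Ω → SignedMeasure Ω}

lemma apply_dirac (hT : GivenByKernel T k) (x : Ω) {A : Set Ω} (hA : MeasurableSet A) :
    T (Measure.dirac x).toSignedMeasure A = k x A := by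
  rw [hT _ A hA, SignedMeasure.sInt_toSignedMeasure, integral_dirac]

lemma eq_zero_of_map_dirac_eq_zero (hT : GivenByKernel T k)
    (hδ : ∀ x, T (Measure.dirac x).toSignedMeasure = 0) (μ : SignedMeasure Ω) : T μ = 0 := by
  have hk : ∀ A, MeasurableSet A → (fun x => k x A) = fun _ => 0 := fun A hA =>
    funext fun x => by rw [← hT.apply_dirac x hA, hδ]; rfl
  ext A hA
  rw [hT μ A hA, hk A hA, SignedMeasure.sInt_const, mul_zero]
  rfl

end GivenByKernel

end

open SignedMeasure in
theorem stmt13 :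
    ∃ T S : SignedMeasure ℝ →ₗ[ℝ] SignedMeasure ℝ,
      (∃ (φ : SignedMeasure ℝ →ₗ[ℝ] ℝ) (m : SignedMeasure ℝ),
        0 ≤ m ∧ ∀ ν : SignedMeasure ℝ, T ν = φ ν • m) ∧
      (∀ μ : SignedMeasure ℝ, 0 ≤ μ → 0 ≤ T μ ∧ T μ ≤ S μ) ∧
      (∃ k : ℝ → SignedMeasure ℝ, IsBddKernel k ∧ GivenByKernel S k) ∧
      ¬ ∃ k : ℝ → SignedMeasure ℝ, IsBddKernel k ∧ GivenByKernel T k := by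
  set ν : Measure ℝ := volume.restrict (Icc 0 1)
  set m := ν.toSignedMeasure
  have hm : 0 ≤ m := Measure.zero_le_toSignedMeasure ν
  refine ⟨diffuseMass.smulRight m, (evalₗ univ).smulRight m, ⟨diffuseMass, m, hm, fun _ => rfl⟩,
    fun μ hμ => ⟨?_, smul_le_smul_of_nonneg_right (diffuseMass_le_apply_univ hμ) hm⟩,
    ⟨fun _ => m, isBddKernel_const m, givenByKernel_const m⟩, ?_⟩
  · simpa using smul_le_smul_of_nonneg_right (diffuseMass_nonneg hμ) hm
  rintro ⟨k, -, hk⟩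
  have hTm : diffuseMass m • m = 0 :=
    hk.eq_zero_of_map_dirac_eq_zero (fun x => by simp [diffuseMass_dirac]) m
  have hTm_univ := congrArg (· univ) hTm
  simp [m, ν, diffuseMass_toSignedMeasure] at hTm_univ
end

section
/- Let (T(t))_{t≥0} be a Markovian semigroup of weakly continuous operators on M(Ω) with transition kernels k_t. If the semigroup is t₀-regular (the probability measures k_{t₀}(x,·), x ∈ Ω, are mutually equivalent) then for all s, t ≥ t₀ and all x, y ∈ Ω the measures k_s(x,·) and k_t(y,·) are mutually equivalent; in particular the semigroup is s-regular for every s ≥ t₀. -/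
open MeasureTheory Topology Filter
open scoped NNReal ENNReal BoundedContinuousFunction

theorem stmt17 {Ω : Type*} [TopologicalSpace Ω] [PolishSpace Ω] [MeasurableSpace Ω] [BorelSpace Ω]
    (k : ℝ≥0 → Ω → Measure Ω)
    (hprob : ∀ t x, IsProbabilityMeasure (k t x))
    (hmeas : ∀ (t : ℝ≥0) (A : Set Ω), MeasurableSet A → Measurable fun x => k t x A)
    (hCK : ∀ (a b : ℝ≥0) (x : Ω) (A : Set Ω), MeasurableSet A →
      k (a + b) x A = ∫⁻ y, k a y A ∂(k b x))
    (t₀ : ℝ≥0) (ht₀ : 0 < t₀)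
    (hreg : ∀ x y : Ω, k t₀ x ≪ k t₀ y) :
    ∀ s t : ℝ≥0, t₀ ≤ s → t₀ ≤ t → ∀ x y : Ω, k s x ≪ k t y := by
  intro s t hs ht x y
  intro A hA0
  -- pass to a measurable superset
  set B := toMeasurable (k t y) A with hB
  have hBm : MeasurableSet B := measurableSet_toMeasurable _ _
  have hBA : A ⊆ B := subset_toMeasurable _ _
  have hB0 : k t y B = 0 := by rw [hB, measure_toMeasurable]; exact hA0
  have hsum_t : t₀ + (t - t₀) = t := by
    rw [add_comm]; exact tsub_add_cancel_of_le ht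
  have hsum_s : t₀ + (s - t₀) = s := by
    rw [add_comm]; exact tsub_add_cancel_of_le hs
  have hCKt := hCK t₀ (t - t₀) y B hBm
  rw [hsum_t] at hCKt
  have h0 : ∫⁻ z, k t₀ z B ∂(k (t - t₀) y) = 0 := hCKt ▸ hB0
  have hae : ∀ᵐ z ∂(k (t - t₀) y), k t₀ z B = 0 := by
    have := (lintegral_eq_zero_iff (hmeas t₀ B hBm)).mp h0
    filter_upwards [this] with z hz using hz
  have hne : (k (t - t₀) y) Set.univ ≠ 0 := by
    have := (hprob (t - t₀) y).measure_univ
    simp [this]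
  obtain ⟨z₀, hz₀⟩ : ∃ z₀, k t₀ z₀ B = 0 := by
    by_contra h
    push_neg at h
    have : ∀ᵐ z ∂(k (t - t₀) y), False := by
      filter_upwards [hae] with z hz
      exact h z hz
    simp [ae_iff] at this
  have hall : ∀ z, k t₀ z B = 0 := fun z => hreg z z₀ hz₀
  have hsB : k s x B = 0 := by
    have h2 := hCK t₀ (s - t₀) x B hBm
    rw [hsum_s] at h2
    rw [h2]; simp [hall]
  exact measure_mono_null hBA hsB
end
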